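/- The vector fields X = λ∂₁ − u₁∂₃ and Y = (λ−1)∂₂ − u₂∂₃ commute for all λ ∉ {0,1} if and only if u satisfies u₁₂ + u₂u₁₃ − u₁u₂₃ = 0. -/

import Mathlib

/-- Partial derivative in the `i`-th coordinate direction. -/
noncomputable def pd (i : Fin 3) (f : (Fin 3 → ℝ) → ℝ) (x : Fin 3 → ℝ) : ℝ :=
  fderiv ℝ f x (Pi.single i 1)

/-- Lie bracket of vector fields on `ℝ³`, given by their coefficient functions. -/
noncomputable def lieBracket (X Y : (Fin 3 → ℝ) → Fin 3 → ℝ)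
    (x : Fin 3 → ℝ) (i : Fin 3) : ℝ :=
  ∑ j : Fin 3, (X x j * pd j (fun y => Y y i) x - Y x j * pd j (fun y => X y i) x)

/-!
Both fields have constant `∂₁`, `∂₂` coefficients, so only the `∂₃`-component of `[X, Y]`
can be nonzero. Expanding it and using the symmetry of second derivatives of the `C²` function
`u`, the terms `λ u₁₂ − (λ − 1) u₁₂` collapse to `u₁₂`, and the component is exactly
`−(u₁₂ + u₂u₁₃ − u₁u₂₃)`, independently of `λ`.
-/

lemma pd_const (i : Fin 3) (c : ℝ) (x : Fin 3 → ℝ) : pd i (fun _ => c) x = 0 := by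
  simp [pd]

lemma pd_neg (i : Fin 3) (f : (Fin 3 → ℝ) → ℝ) (x : Fin 3 → ℝ) :
    pd i (fun y => -f y) x = -pd i f x := by
  simp [pd]

lemma pd_pd_eq_fderiv_fderiv {f : (Fin 3 → ℝ) → ℝ} {x : Fin 3 → ℝ}
    (hf : DifferentiableAt ℝ (fderiv ℝ f) x) (i j : Fin 3) :
    pd i (pd j f) x = fderiv ℝ (fderiv ℝ f) x (Pi.single i 1) (Pi.single j 1) := by
  change fderiv ℝ (fun y => fderiv ℝ f y (Pi.single j 1)) x (Pi.single i 1) = _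
  rw [fderiv_clm_apply hf (differentiableAt_const _)]
  simp

lemma pd_pd_comm {f : (Fin 3 → ℝ) → ℝ} (hf : ContDiff ℝ 2 f) (i j : Fin 3) (x : Fin 3 → ℝ) :
    pd i (pd j f) x = pd j (pd i f) x := by
  have hf' : DifferentiableAt ℝ (fderiv ℝ f) x :=
    (hf.fderiv_right (by norm_num)).differentiable one_ne_zero x
  rw [pd_pd_eq_fderiv_fderiv hf', pd_pd_eq_fderiv_fderiv hf']
  exact hf.contDiffAt.isSymmSndFDerivAt (by simp) _ _

lemma lieBracket_eq (l m : ℝ) (a b : (Fin 3 → ℝ) → ℝ) (x : Fin 3 → ℝ) :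
    lieBracket (fun x => ![l, 0, a x]) (fun x => ![0, m, b x]) x
      = ![0, 0, l * pd 0 b x - m * pd 1 a x + a x * pd 2 b x - b x * pd 2 a x] := by
  ext i
  fin_cases i
  · simp [lieBracket, pd_const]
  · simp [lieBracket, pd_const]
  · simp [lieBracket, Fin.sum_univ_three]
    ring

lemma lieBracket_laxPair_eq {u : (Fin 3 → ℝ) → ℝ} (hu : ContDiff ℝ 2 u) (l : ℝ)
    (x : Fin 3 → ℝ) :
    lieBracket (fun x => ![l, 0, -(pd 0 u x)]) (fun x => ![0, l - 1, -(pd 1 u x)]) x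
      = ![0, 0, -(pd 0 (pd 1 u) x + pd 1 u x * pd 0 (pd 2 u) x
        - pd 0 u x * pd 1 (pd 2 u) x)] := by
  rw [lieBracket_eq, pd_neg, pd_neg, pd_neg, pd_neg, pd_pd_comm hu 1 0, pd_pd_comm hu 2 0,
    pd_pd_comm hu 2 1]
  congr 3
  ring

/-- The vector fields `X = λ∂₁ − u₁∂₃` and `Y = (λ−1)∂₂ − u₂∂₃` commute for all
`λ ∉ {0, 1}` iff `u` satisfies `u₁₂ + u₂u₁₃ − u₁u₂₃ = 0`. -/
theorem lax_pair_11_22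
    (u : (Fin 3 → ℝ) → ℝ) (hu : ContDiff ℝ 2 u) :
    (∀ l : ℝ, l ≠ 0 → l ≠ 1 → ∀ x, ∀ i : Fin 3,
      lieBracket
        (fun x => ![l, 0, -(pd 0 u x)])
        (fun x => ![0, l - 1, -(pd 1 u x)])
        x i = 0) ↔
    (∀ x, pd 0 (pd 1 u) x + pd 1 u x * pd 0 (pd 2 u) x
        - pd 0 u x * pd 1 (pd 2 u) x = 0) := by
  simp only [lieBracket_laxPair_eq hu]
  constructor
  · intro h x
    exact neg_eq_zero.mp (h 2 two_ne_zero (by norm_num) x 2)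
  · intro h l _ _ x i
    fin_cases i <;> simp [h x]
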